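/- Let n ≥ 4 be even. For all g = (a,b), h = (c,d) ∈ ℤ₂×ℤ₂ and 1 ≤ p < q ≤ n/2, the twisted string order parameter acts on the cyclic cluster state by the twist phase: T_{[p,q]}^{(g,h)} |C_n⟩ = (−1)^{ad−bc} |C_n⟩. Consequently, for n divisible by 6 and distinct nontrivial g, h ∈ ℤ₂×ℤ₂, the cluster state wins the triangle game with certainty: P_n^{(Q)}(g,h | |C_n⟩⟨C_n|) = 1. -/

import Mathlib

open Matrix Complex
open scoped ComplexOrder

noncomputable section

/-- The state space of `n` qubits, as functions on classical bit strings. -/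
abbrev QState (n : ℕ) := (Fin n → Fin 2) → ℂ

/-- Operators on `n` qubits: `2^n × 2^n` complex matrices. -/
abbrev Op (n : ℕ) := Matrix (Fin n → Fin 2) (Fin n → Fin 2) ℂ

/-- The single-qubit Pauli `X` matrix. -/
def Xmat : Matrix (Fin 2) (Fin 2) ℂ := !![0, 1; 1, 0]

/-- The single-qubit Pauli `Z` matrix. -/
def Zmat : Matrix (Fin 2) (Fin 2) ℂ := !![1, 0; 0, -1]

/-- Map a 1-based cyclic site label `j ∈ {1,…,n}` (taken mod `n`) to an index in `Fin n`. -/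
def site (n : ℕ) [NeZero n] (j : ℕ) : Fin n :=
  ⟨(j + (n - 1)) % n, Nat.mod_lt _ (Nat.pos_of_ne_zero (NeZero.ne n))⟩

/-- The operator acting as the single-qubit matrix `M` on qubit `i` and as identity elsewhere. -/
def onSite (n : ℕ) (i : Fin n) (M : Matrix (Fin 2) (Fin 2) ℂ) : Op n :=
  Matrix.of fun s t => (if ∀ k, k ≠ i → s k = t k then 1 else 0) * M (s i) (t i)

/-- Pauli `X` on (1-based, cyclic) site `j`. -/
def PX (n : ℕ) [NeZero n] (j : ℕ) : Op n := onSite n (site n j) Xmat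

/-- Pauli `Z` on (1-based, cyclic) site `j`. -/
def PZ (n : ℕ) [NeZero n] (j : ℕ) : Op n := onSite n (site n j) Zmat

/-- The cyclic cluster stabilizer `K_j = Z_{j-1} X_j Z_{j+1}` (for `1 ≤ j ≤ n`). -/
def Kstab (n : ℕ) [NeZero n] (j : ℕ) : Op n := PZ n (j - 1) * PX n j * PZ n (j + 1)

/-- The symmetry group `ℤ₂ × ℤ₂`. -/
abbrev G2 := ZMod 2 × ZMod 2

/-- The nontrivial element `x = (0,1)` of `ℤ₂ × ℤ₂`. -/
def gx : G2 := (0, 1)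

/-- The nontrivial element `y = (1,0)` of `ℤ₂ × ℤ₂`. -/
def gy : G2 := (1, 0)

/-- The nontrivial element `z = (1,1)` of `ℤ₂ × ℤ₂`. -/
def gz : G2 := (1, 1)

/-- The global symmetry representation `U((a,b)) = ∏_{j odd} X_j^a ∏_{j even} X_j^b`
on `n` qubits (`n` even), written as a product over the `n/2` two-site blocks. -/
def Usym (n : ℕ) [NeZero n] (g : G2) : Op n :=
  ((List.range (n / 2)).map
    (fun p => PX n (2 * p + 1) ^ g.1.val * PX n (2 * p + 2) ^ g.2.val)).prod

/-- Left boundary operator `V^L_p((a,b))`: `Z^b` on qubit `2p-1` and `X^b Z^a` on qubit `2p`. -/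
def VL (n : ℕ) [NeZero n] (p : ℕ) (g : G2) : Op n :=
  PZ n (2 * p - 1) ^ g.2.val * (PX n (2 * p) ^ g.2.val * PZ n (2 * p) ^ g.1.val)

/-- Right boundary operator `V^R_p((a,b))`: `Z^b X^a` on qubit `2p-1` and `Z^a` on qubit `2p`. -/
def VR (n : ℕ) [NeZero n] (p : ℕ) (g : G2) : Op n :=
  (PZ n (2 * p - 1) ^ g.2.val * PX n (2 * p - 1) ^ g.1.val) * PZ n (2 * p) ^ g.1.val

/-- Truncated symmetry `U_{[p,q]}((a,b)) = ∏_{r=p+1}^{q-1} X_{2r-1}^a X_{2r}^b`. -/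
def Ustr (n : ℕ) [NeZero n] (p q : ℕ) (g : G2) : Op n :=
  ((List.range (q - (p + 1))).map
    (fun r => PX n (2 * (p + 1 + r) - 1) ^ g.1.val * PX n (2 * (p + 1 + r)) ^ g.2.val)).prod

/-- The string order parameter `S_{[p,q]}(g) = V^L_p(g) · U_{[p,q]}(g) · V^R_q(g)`. -/
def SOPm (n : ℕ) [NeZero n] (p q : ℕ) (g : G2) : Op n :=
  VL n p g * Ustr n p q g * VR n q g

/-- The twisted string order parameter
`T_{[p,q]}^{(g,h)} = V^R_q(g) · U(h) · V^L_p(g) · U_{[p,q]}(g)`. -/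
def TSOP (n : ℕ) [NeZero n] (p q : ℕ) (g h : G2) : Op n :=
  VR n q g * Usym n h * VL n p g * Ustr n p q g

/-- The triangle-game winning operator
`O_{g,h} = (1/32)(12·1 + 12 U(g) + U(h) + U(gh) − 3T − 3U(g)T)` with `T = T_{[1,n/6+1]}^{(g,h)}`. -/
def Owin (n : ℕ) [NeZero n] (g h : G2) : Op n :=
  (32 : ℂ)⁻¹ • (12 • (1 : Op n) + 12 • Usym n g + Usym n h + Usym n (g + h)
    - 3 • TSOP n 1 (n / 6 + 1) g h - 3 • (Usym n g * TSOP n 1 (n / 6 + 1) g h))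

/-- The `n`-fold tensor product `|+⟩^{⊗n}`, with all amplitudes `(1/√2)^n`. -/
def plusState (n : ℕ) : QState n := fun _ => (((Real.sqrt 2)⁻¹ : ℝ) : ℂ) ^ n

/-- The controlled-`Z` gate between (1-based, cyclic) sites `j` and `k`. -/
def CZm (n : ℕ) [NeZero n] (j k : ℕ) : Op n :=
  Matrix.of fun s t =>
    if s = t then (if s (site n j) = 1 ∧ s (site n k) = 1 then -1 else 1) else 0

/-- The `n`-qubit cyclic cluster state `|C_n⟩ = (∏_{j=1}^n CZ_{j,j+1}) |+⟩^{⊗n}`. -/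
def cluster (n : ℕ) [NeZero n] : QState n :=
  (((List.range n).map (fun j => CZm n (j + 1) (j + 2))).prod).mulVec (plusState n)

/-!
Every operator in the statement is a Pauli monomial `Z^z X^x` with `x, z ∈ 𝔽₂ⁿ`, and
`Z^z X^x · Z^z' X^x' = (-1)^(z' ⬝ x) Z^(z + z') X^(x + x')`. The cluster state has amplitudes
`2^(-n/2) (-1)^E(s)`, where `E(s) = ∑ sᵢ sᵢ₊₁` counts the edges of the ring inside `s`,
and `E(s + x) = E(s) + E(x) + x ⬝ A s` for the adjacency operator `A` of the ring. Hence
`Z^(A x) X^x |C_n⟩ = (-1)^E(x) |C_n⟩`.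

Both `U(h)` and the twisted string order parameter have this form. For `U(h)`, `x` is the
`(c, d)`-pattern around the whole ring, and `A x = 0`, `E(x) = 0` because `n` is even. For
`T_{[p,q]}^{(g,h)}`, up to the sign `(-1)^(ab + bc + ad)`, `x` adds to this the `(b, a)`-pattern on
the sites `2p, …, 2q - 1`, which covers an odd number of bonds and so contributes `E = ab`. Hence
`T |C_n⟩ = (-1)^(ad + bc) |C_n⟩`, which is `-|C_n⟩` for distinct nontrivial `g, h`, and then
`O_{g,h} |C_n⟩ = (12 + 12 + 1 + 1 + 3 + 3)/32 · |C_n⟩ = |C_n⟩`.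
-/

namespace ClusterState

open Finset Fin.CommRing

section PauliMonomials

variable {n : ℕ}

def phase (e : Fin 2) : ℂ := (-1) ^ (e : ℕ)

@[simp] lemma phase_zero : phase 0 = 1 := rfl

lemma phase_add (e f : Fin 2) : phase (e + f) = phase e * phase f := by
  rw [phase, phase, phase, Fin.val_add, ← neg_one_pow_eq_pow_mod_two, pow_add]

lemma phase_mul_self (e : Fin 2) : phase e * phase e = 1 := by
  rw [← phase_add, CharTwo.add_self_eq_zero, phase_zero]

lemma star_phase (e : Fin 2) : star (phase e) = phase e := by
  simp [phase]

lemma bits_add_self (x : Fin n → Fin 2) : x + x = 0 :=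
  funext fun i => CharTwo.add_self_eq_zero (x i)

/-- The Pauli monomial `Z^z X^x`. -/
def pauliOp (x z : Fin n → Fin 2) : Op n :=
  Matrix.of fun s t => if t = s + x then phase (z ⬝ᵥ s) else 0

lemma pauliOp_mulVec (x z : Fin n → Fin 2) (v : QState n) (s : Fin n → Fin 2) :
    (pauliOp x z).mulVec v s = phase (z ⬝ᵥ s) * v (s + x) := by
  simp only [pauliOp, Matrix.mulVec, dotProduct, Matrix.of_apply, ite_mul, zero_mul]
  exact Fintype.sum_ite_eq' (s + x) _

lemma pauliOp_mul (x z x' z' : Fin n → Fin 2) :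
    pauliOp x z * pauliOp x' z' = phase (z' ⬝ᵥ x) • pauliOp (x + x') (z + z') := by
  refine Matrix.ext_iff_mulVec.mpr fun v => funext fun s => ?_
  simp only [← Matrix.mulVec_mulVec, Matrix.smul_mulVec, Pi.smul_apply, pauliOp_mulVec,
    smul_eq_mul, dotProduct_add, add_dotProduct, phase_add, add_assoc]
  ring

lemma pauliOp_zero : pauliOp (0 : Fin n → Fin 2) 0 = 1 := by
  refine Matrix.ext_iff_mulVec.mpr fun v => funext fun s => ?_
  rw [pauliOp_mulVec, Matrix.one_mulVec, zero_dotProduct, phase_zero, add_zero, one_mul]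

lemma list_prod_map_pauliOp {α : Type*} (L : List α) (x : α → Fin n → Fin 2) :
    (L.map fun r => pauliOp (x r) 0).prod = pauliOp (L.map x).sum 0 := by
  induction L with
  | nil => exact pauliOp_zero.symm
  | cons r L ih =>
    rw [List.map_cons, List.prod_cons, ih, pauliOp_mul, zero_dotProduct, phase_zero, one_smul,
      add_zero, List.map_cons, List.sum_cons]

lemma eq_add_single_iff {ι M : Type*} [DecidableEq ι] [AddZeroClass M] {i : ι} {s t : ι → M}
    {e : M} : t = s + Pi.single i e ↔ (∀ k, k ≠ i → s k = t k) ∧ t i = s i + e := by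
  constructor
  · rintro rfl
    exact ⟨fun k hk => by simp [hk], by simp⟩
  · rintro ⟨hne, hi⟩
    funext k
    by_cases hk : k = i
    · subst hk; simpa using hi
    · simp [hk, hne k hk]

lemma onSite_Xmat (i : Fin n) : onSite n i Xmat = pauliOp (Pi.single i 1) 0 := by
  ext s t
  have hX : ∀ a b : Fin 2, Xmat a b = if b = a + 1 then 1 else 0 := by
    intro a b; fin_cases a <;> fin_cases b <;> rfl
  simp only [onSite, pauliOp, Matrix.of_apply, hX, ite_zero_mul_ite_zero, mul_one,
    eq_add_single_iff, zero_dotProduct, phase_zero]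

lemma onSite_Zmat (i : Fin n) : onSite n i Zmat = pauliOp 0 (Pi.single i 1) := by
  ext s t
  have hZ : ∀ a b : Fin 2, Zmat a b = if b = a + 0 then phase a else 0 := by
    intro a b; fin_cases a <;> fin_cases b <;> simp [Zmat, phase]
  simp only [onSite, pauliOp, Matrix.of_apply, hZ, ite_zero_mul_ite_zero, one_mul,
    ← Pi.single_zero i, eq_add_single_iff, single_dotProduct]

end PauliMonomials

variable {n : ℕ} [NeZero n]

section Cycle

lemma sum_comp_add_one {M : Type*} [AddCommMonoid M] (f : Fin n → M) :
    ∑ i, f (i + 1) = ∑ i, f i :=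
  Equiv.sum_comp (Equiv.addRight (1 : Fin n)) f

lemma sum_comp_sub_one_mul {R : Type*} [NonUnitalNonAssocSemiring R] (x y : Fin n → R) :
    ∑ i, x (i - 1) * y i = ∑ i, x i * y (i + 1) := by
  rw [← sum_comp_add_one]
  simp only [add_sub_cancel_right]

def cycleAdj : (Fin n → Fin 2) →+ (Fin n → Fin 2) where
  toFun x i := x (i - 1) + x (i + 1)
  map_zero' := rfl
  map_add' x y := by
    funext i
    simp only [Pi.add_apply]
    abel

def edgeParity (x : Fin n → Fin 2) : Fin 2 := ∑ i, x i * x (i + 1)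

lemma cycleAdj_apply (x : Fin n → Fin 2) (i : Fin n) : cycleAdj x i = x (i - 1) + x (i + 1) := rfl

lemma cycleAdj_single (i : Fin n) (e : Fin 2) :
    cycleAdj (Pi.single i e) = Pi.single (i + 1) e + Pi.single (i - 1) e := by
  funext k
  simp only [cycleAdj_apply, Pi.add_apply, Pi.single_apply, sub_eq_iff_eq_add,
    eq_sub_iff_add_eq]

lemma cycleAdj_dotProduct (x y : Fin n → Fin 2) : cycleAdj x ⬝ᵥ y = x ⬝ᵥ cycleAdj y := by
  have h : ∑ i, x (i + 1) * y i = ∑ i, x i * y (i - 1) := by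
    simpa only [mul_comm] using (sum_comp_sub_one_mul y x).symm
  simp only [dotProduct, cycleAdj_apply, add_mul, mul_add, sum_add_distrib, sum_comp_sub_one_mul, h]
  exact add_comm _ _

lemma edgeParity_add (x y : Fin n → Fin 2) :
    edgeParity (x + y) = edgeParity x + edgeParity y + y ⬝ᵥ cycleAdj x := by
  have h : ∑ i, y i * x (i - 1) = ∑ i, x i * y (i + 1) := by
    rw [← sum_comp_sub_one_mul]; simp only [mul_comm]
  simp only [edgeParity, dotProduct, cycleAdj_apply, Pi.add_apply, add_mul, mul_add,
    sum_add_distrib, h]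
  abel

end Cycle

section Sites

lemma site_succ (j : ℕ) : site n (j + 1) = site n j + 1 := by
  ext
  simp only [site, Fin.val_add, Fin.val_one', Nat.add_mod_mod, Nat.mod_add_mod]
  congr 1
  have := NeZero.pos n
  omega

lemma site_succ_sub_one (j : ℕ) : site n (j + 1) - 1 = site n j := by
  rw [site_succ, add_sub_cancel_right]

lemma site_add_self (j : ℕ) : site n (j + n) = site n j := by
  ext
  simp only [site, show j + n + (n - 1) = j + (n - 1) + n by omega, Nat.add_mod_right]

lemma site_sub_one (j : ℕ) : site n j - 1 = site n (j + (n - 1)) := by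
  rw [sub_eq_iff_eq_add, ← site_succ, show j + (n - 1) + 1 = j + n by have := NeZero.pos n; omega,
    site_add_self]

lemma site_val_succ (i : Fin n) : site n (i + 1) = i := by
  ext
  simp only [site, show (i : ℕ) + 1 + (n - 1) = i + n by have := NeZero.pos n; omega,
    Nat.add_mod_right, Nat.mod_eq_of_lt i.isLt]

lemma site_add_inj {j k l : ℕ} (hk : k < n) (hl : l < n) :
    site n (j + k) = site n (j + l) ↔ k = l := by
  refine ⟨fun h => ?_, fun h => h ▸ rfl⟩
  have h : (j + (n - 1)) + k ≡ (j + (n - 1)) + l [MOD n] := by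
    have := congrArg Fin.val h
    simp only [site] at this
    unfold Nat.ModEq
    rwa [show j + (n - 1) + k = j + k + (n - 1) by omega,
      show j + (n - 1) + l = j + l + (n - 1) by omega]
  exact (Nat.ModEq.add_left_cancel' _ h).eq_of_lt_of_lt hk hl

lemma site_add_eq_site_iff {j k : ℕ} (hk : k < n) : site n (j + k) = site n j ↔ k = 0 := by
  simpa using site_add_inj (j := j) hk (NeZero.pos n)

lemma PX_pow (j : ℕ) (e : Fin 2) :
    PX n j ^ ZMod.val (n := 2) e = pauliOp (Pi.single (site n j) e) 0 := by
  rw [PX, onSite_Xmat, show ZMod.val (n := 2) e = (e : ℕ) from rfl]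
  fin_cases e <;> simp [pauliOp_zero]

lemma PZ_pow (j : ℕ) (e : Fin 2) :
    PZ n j ^ ZMod.val (n := 2) e = pauliOp 0 (Pi.single (site n j) e) := by
  rw [PZ, onSite_Zmat, show ZMod.val (n := 2) e = (e : ℕ) from rfl]
  fin_cases e <;> simp [pauliOp_zero]

end Sites

section ClusterAmplitudes

lemma CZm_mulVec (j k : ℕ) (v : QState n) (s : Fin n → Fin 2) :
    (CZm n j k).mulVec v s = phase (s (site n j) * s (site n k)) * v s := by
  have h : ∀ a b : Fin 2, (if a = 1 ∧ b = 1 then (-1 : ℂ) else 1) = phase (a * b) := by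
    intro a b; fin_cases a <;> fin_cases b <;> simp [phase]
  simp only [CZm, Matrix.mulVec, dotProduct, Matrix.of_apply, ite_mul, zero_mul, h]
  exact Fintype.sum_ite_eq s _

lemma list_prod_CZm_mulVec (L : List ℕ) (v : QState n) (s : Fin n → Fin 2) :
    ((L.map fun j => CZm n (j + 1) (j + 2)).prod).mulVec v s
      = phase (L.map fun j => s (site n (j + 1)) * s (site n (j + 2))).sum * v s := by
  induction L with
  | nil => simp
  | cons j L ih =>
    rw [List.map_cons, List.prod_cons, ← Matrix.mulVec_mulVec, CZm_mulVec, ih, List.map_cons,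
      List.sum_cons, phase_add, mul_assoc]

lemma cluster_apply (s : Fin n → Fin 2) :
    cluster n s = phase (edgeParity s) * (((Real.sqrt 2)⁻¹ : ℝ) : ℂ) ^ n := by
  rw [cluster, list_prod_CZm_mulVec, plusState]
  congr 2
  change ∑ j ∈ range n, s (site n (j + 1)) * s (site n (j + 1 + 1)) = _
  rw [← Fin.sum_univ_eq_sum_range (fun j => s (site n (j + 1)) * s (site n (j + 1 + 1)))]
  simp only [edgeParity, site_succ (_ + 1), site_val_succ]

lemma cluster_dotProduct_star : cluster n ⬝ᵥ star (cluster n) = 1 := by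
  have h : ∀ s, cluster n s * star (cluster n s) = (2⁻¹ : ℂ) ^ n := by
    intro s
    rw [cluster_apply, star_mul', star_phase, star_pow, Complex.star_def, Complex.conj_ofReal,
      mul_mul_mul_comm, phase_mul_self, one_mul, ← mul_pow, ← Complex.ofReal_mul, ← mul_inv,
      Real.mul_self_sqrt zero_le_two]
    push_cast; rfl
  simp only [dotProduct, Pi.star_apply, h, sum_const, card_univ, Fintype.card_fun,
    Fintype.card_fin, nsmul_eq_mul]
  push_cast
  rw [← mul_pow]
  norm_num

lemma pauliOp_cycleAdj_mulVec_cluster (x : Fin n → Fin 2) :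
    (pauliOp x (cycleAdj x)).mulVec (cluster n) = phase (edgeParity x) • cluster n := by
  funext s
  rw [pauliOp_mulVec, cluster_apply, edgeParity_add, cycleAdj_dotProduct, Pi.smul_apply,
    cluster_apply, smul_eq_mul, phase_add, phase_add]
  linear_combination
    (phase (edgeParity s) * phase (edgeParity x) * (((Real.sqrt 2)⁻¹ : ℝ) : ℂ) ^ n) *
      phase_mul_self (x ⬝ᵥ cycleAdj s)

end ClusterAmplitudes

section Dimers

def dimer (u w : Fin 2) (j : ℕ) : Fin n → Fin 2 :=
  Pi.single (site n j) u + Pi.single (site n (j + 1)) w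

def dimerChain (u w : Fin 2) (j m : ℕ) : Fin n → Fin 2 :=
  ∑ r ∈ range m, dimer u w (j + 2 * r)

variable (u w : Fin 2)

lemma dimerChain_succ (j m : ℕ) :
    dimerChain (n := n) u w j (m + 1) = dimerChain u w j m + dimer u w (j + 2 * m) :=
  sum_range_succ _ _

lemma dimer_add_self (j : ℕ) : dimer (n := n) u w (j + n) = dimer u w j := by
  rw [dimer, dimer, site_add_self, show j + n + 1 = j + 1 + n by omega, site_add_self]

lemma dimer_apply {j k : ℕ} (hk : k < n) (hn : 1 < n) :
    dimer u w j (site n (j + k)) = (if k = 0 then u else 0) + (if k = 1 then w else 0) := by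
  simp only [dimer, Pi.add_apply, Pi.single_apply, site_add_eq_site_iff hk, site_add_inj hk hn]

lemma dimerChain_apply {j m k : ℕ} (hm : 2 * m ≤ n) (hk : k < 2 * m) :
    dimerChain u w j m (site n (j + k)) = if k % 2 = 0 then u else w := by
  have hdimer : ∀ r < m, dimer u w (j + 2 * r) (site n (j + k))
      = (if k = 2 * r then u else 0) + (if k = 2 * r + 1 then w else 0) := by
    intro r hr
    simp (disch := omega) only [dimer, Pi.add_apply, Pi.single_apply, add_assoc, site_add_inj]
  rw [dimerChain, Finset.sum_apply, sum_eq_single (k / 2)]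
  · rw [hdimer _ (by omega)]
    split_ifs <;> omega
  · intro r hr hrk
    rw [hdimer _ (Finset.mem_range.mp hr), if_neg (by omega), if_neg (by omega), add_zero]
  · intro h; exact absurd (Finset.mem_range.mpr (by omega)) h

lemma single_add_dimerChain_add_single (j m : ℕ) :
    Pi.single (site n (j + 1)) w + dimerChain u w (j + 2) m + Pi.single (site n (j + 2 * m + 2)) u
      = dimerChain w u (j + 1) (m + 1) := by
  induction m with
  | zero => simp [dimerChain, dimer]
  | succ m ih =>
    rw [dimerChain_succ, dimerChain_succ w u, ← ih]
    simp only [dimer]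
    ring_nf

lemma cycleAdj_dimer (j : ℕ) :
    cycleAdj (dimer (n := n) u w (j + 1)) = dimer u w j + dimer u w (j + 2) := by
  rw [dimer, dimer, dimer, map_add, cycleAdj_single, cycleAdj_single, site_succ_sub_one,
    site_succ_sub_one, ← site_succ, ← site_succ]
  abel

-- The sum telescopes because `x + x = 0`.
lemma cycleAdj_dimerChain (j m : ℕ) :
    cycleAdj (dimerChain (n := n) u w (j + 1) m) = dimer u w j + dimer u w (j + 2 * m) := by
  induction m with
  | zero => simp [dimerChain, bits_add_self]
  | succ m ih =>
    rw [dimerChain_succ, map_add, ih, show j + 1 + 2 * m = j + 2 * m + 1 by ring, cycleAdj_dimer,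
      add_assoc, ← add_assoc (dimer u w (j + 2 * m)), bits_add_self, zero_add]
    rfl

lemma single_add_dimerChain_add_single_of_lt {p q : ℕ} (hp : 1 ≤ p) (hpq : p < q) :
    Pi.single (site n (2 * p)) w + dimerChain u w (2 * p + 1) (q - (p + 1)) +
      Pi.single (site n (2 * q - 1)) u = dimerChain w u (2 * p) (q - p) := by
  have h := single_add_dimerChain_add_single (n := n) u w (2 * p - 1) (q - (p + 1))
  rwa [show 2 * p - 1 + 1 = 2 * p by omega, show 2 * p - 1 + 2 = 2 * p + 1 by omega,
    show 2 * p - 1 + 2 * (q - (p + 1)) + 2 = 2 * q - 1 by omega,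
    show q - (p + 1) + 1 = q - p by omega] at h

lemma cycleAdj_dimerChain_of_lt {p q : ℕ} (hp : 1 ≤ p) (hpq : p < q) :
    cycleAdj (dimerChain (n := n) u w (2 * p) (q - p)) =
      Pi.single (site n (2 * p - 1)) u + Pi.single (site n (2 * p)) w +
        (Pi.single (site n (2 * q - 1)) u + Pi.single (site n (2 * q)) w) := by
  have h := cycleAdj_dimerChain (n := n) u w (2 * p - 1) (q - p)
  rwa [show 2 * p - 1 + 1 = 2 * p by omega, dimer, dimer, show 2 * p - 1 + 1 = 2 * p by omega,
    show 2 * p - 1 + 2 * (q - p) = 2 * q - 1 by omega, show 2 * q - 1 + 1 = 2 * q by omega] at h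

lemma cycleAdj_dimerChain_cycle {j m : ℕ} (hm : 2 * m = n) :
    cycleAdj (dimerChain (n := n) u w (j + 1) m) = 0 := by
  rw [cycleAdj_dimerChain, hm, dimer_add_self, bits_add_self]

lemma dimer_dotProduct (j : ℕ) (v : Fin n → Fin 2) :
    dimer u w j ⬝ᵥ v = u * v (site n j) + w * v (site n (j + 1)) := by
  rw [dimer, add_dotProduct, single_dotProduct, single_dotProduct]

lemma dimer_dotProduct_succ (hn : 3 ≤ n) (j : ℕ) :
    dimer (n := n) u w (j + 1) ⬝ᵥ dimer u w j = u * w := by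
  rw [dimer_dotProduct, dimer_apply u w (k := 1) (by omega) (by omega),
    show j + 1 + 1 = j + 2 by ring, dimer_apply u w (k := 2) (by omega) (by omega)]
  simp

lemma dimer_dotProduct_of_two_le {j k : ℕ} (hk : 2 ≤ k) (hkn : k + 1 < n) :
    dimer (n := n) u w (j + k) ⬝ᵥ dimer u w j = 0 := by
  rw [dimer_dotProduct, dimer_apply u w (by omega) (by omega),
    show j + k + 1 = j + (k + 1) by ring, dimer_apply u w hkn (by omega)]
  simp [show k ≠ 0 by omega, show k ≠ 1 by omega]

lemma edgeParity_single (hn : 1 < n) (j : ℕ) (e : Fin 2) :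
    edgeParity (Pi.single (site n j) e) = 0 := by
  refine sum_eq_zero fun i _ => ?_
  by_cases hi : i = site n j
  · rw [hi, ← site_succ, Pi.single_apply _ _ (site n (j + 1)),
      if_neg (by rw [site_add_eq_site_iff hn]; omega), mul_zero]
  · rw [Pi.single_apply, if_neg hi, zero_mul]

lemma edgeParity_dimer (hn : 3 ≤ n) (j : ℕ) : edgeParity (dimer (n := n) u w j) = u * w := by
  rw [dimer, edgeParity_add, edgeParity_single (by omega), edgeParity_single (by omega),
    cycleAdj_single, single_dotProduct, Pi.add_apply, ← site_succ, site_sub_one,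
    Pi.single_apply, Pi.single_apply, if_pos rfl,
    if_neg (by rw [site_add_inj (by omega) (by omega)]; omega)]
  ring

lemma edgeParity_dimerChain {j m : ℕ} (hm : 2 * (m + 1) < n) :
    edgeParity (dimerChain (n := n) u w (j + 1) (m + 1)) = u * w := by
  induction m with
  | zero =>
    rw [dimerChain_succ, dimerChain, sum_range_zero, zero_add, edgeParity_dimer _ _ (by omega)]
  | succ m ih =>
    rw [dimerChain_succ, edgeParity_add, ih (by omega), edgeParity_dimer _ _ (by omega),
      cycleAdj_dimerChain, dotProduct_add, show j + 1 + 2 * (m + 1) = j + (2 * m + 3) by ring,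
      dimer_dotProduct_of_two_le _ _ (by omega) (by omega),
      show j + (2 * m + 3) = j + 2 * (m + 1) + 1 by ring, dimer_dotProduct_succ _ _ (by omega),
      CharTwo.add_self_eq_zero, zero_add, zero_add]

-- Around the whole ring the chain closes up and its last dimer meets the first one as well.
lemma edgeParity_dimerChain_cycle {j m : ℕ} (hm : 2 * (m + 2) = n) :
    edgeParity (dimerChain (n := n) u w (j + 1) (m + 2)) = 0 := by
  rw [dimerChain_succ, edgeParity_add, edgeParity_dimerChain _ _ (by omega),
    edgeParity_dimer _ _ (by omega), cycleAdj_dimerChain, dotProduct_add,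
    show j + 1 + 2 * (m + 1) = j + 2 * (m + 1) + 1 by ring, dimer_dotProduct_succ _ _ (by omega),
    ← dimer_add_self u w j, show j + n = j + 2 * (m + 1) + 1 + 1 by omega, dotProduct_comm,
    dimer_dotProduct_succ _ _ (by omega), CharTwo.add_self_eq_zero]

end Dimers

section Operators

lemma PX_pow_mul_PX_pow (j : ℕ) (a b : Fin 2) :
    PX n j ^ ZMod.val (n := 2) a * PX n (j + 1) ^ ZMod.val (n := 2) b =
      pauliOp (dimer a b j) 0 := by
  rw [PX_pow, PX_pow, pauliOp_mul, zero_dotProduct, phase_zero, one_smul, add_zero, dimer]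

lemma Usym_eq_pauliOp (a b : Fin 2) : Usym n (a, b) = pauliOp (dimerChain a b 1 (n / 2)) 0 := by
  simp only [Usym, show ∀ p, 2 * p + 2 = 2 * p + 1 + 1 from fun _ => rfl, PX_pow_mul_PX_pow,
    list_prod_map_pauliOp, dimerChain, add_comm 1]
  rfl

lemma Ustr_eq_pauliOp (p q : ℕ) (a b : Fin 2) :
    Ustr n p q (a, b) = pauliOp (dimerChain a b (2 * p + 1) (q - (p + 1))) 0 := by
  have h : ∀ r, PX n (2 * (p + 1 + r) - 1) ^ ZMod.val (n := 2) a * PX n (2 * (p + 1 + r)) ^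
      ZMod.val (n := 2) b = pauliOp (dimer a b (2 * p + 1 + 2 * r)) 0 := fun r => by
    rw [show 2 * (p + 1 + r) - 1 = 2 * p + 1 + 2 * r by omega,
      show 2 * (p + 1 + r) = 2 * p + 1 + 2 * r + 1 by omega, PX_pow_mul_PX_pow]
  simp only [Ustr, h, list_prod_map_pauliOp]
  rfl

lemma VL_eq_smul_pauliOp (p : ℕ) (a b : Fin 2) :
    VL n p (a, b) = phase (a * b) • pauliOp (Pi.single (site n (2 * p)) b)
      (Pi.single (site n (2 * p - 1)) b + Pi.single (site n (2 * p)) a) := by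
  simp only [VL, PX_pow, PZ_pow, pauliOp_mul, Matrix.mul_smul, single_dotProduct,
    Pi.single_eq_same, dotProduct_zero, phase_zero, one_smul, zero_add, add_zero]

lemma VR_eq_pauliOp {q : ℕ} (hn : 2 ≤ n) (hq : 1 ≤ q) (a b : Fin 2) :
    VR n q (a, b) = pauliOp (Pi.single (site n (2 * q - 1)) a)
      (Pi.single (site n (2 * q - 1)) b + Pi.single (site n (2 * q)) a) := by
  have hsite : site n (2 * q) ≠ site n (2 * q - 1) := by
    have h := site_add_eq_site_iff (n := n) (j := 2 * q - 1) (k := 1) (by omega)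
    rwa [show 2 * q - 1 + 1 = 2 * q by omega, iff_false_intro one_ne_zero, iff_false] at h
  simp only [VR, PX_pow, PZ_pow, pauliOp_mul, single_dotProduct, Pi.single_eq_of_ne hsite,
    dotProduct_zero, mul_zero, phase_zero, one_smul, zero_add, add_zero]

-- The sign collects `ab` from `V^L` and `bc + ad` from moving the `Z`s of `V^L` past `U(h)`.
lemma TSOP_eq_smul_pauliOp (hn : Even n) (hn4 : 4 ≤ n) {p q : ℕ} (hp : 1 ≤ p) (hpq : p < q)
    (hq : q ≤ n / 2) (a b c d : Fin 2) :
    TSOP n p q (a, b) (c, d) = phase (a * b + (b * c + a * d)) •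
      pauliOp (dimerChain c d 1 (n / 2) + dimerChain b a (2 * p) (q - p))
        (cycleAdj (dimerChain c d 1 (n / 2) + dimerChain b a (2 * p) (q - p))) := by
  rw [TSOP, VR_eq_pauliOp (by omega) (by omega), Usym_eq_pauliOp, VL_eq_smul_pauliOp,
    Ustr_eq_pauliOp]
  simp only [pauliOp_mul, Matrix.smul_mul, Matrix.mul_smul, smul_smul, zero_dotProduct, phase_zero,
    mul_one, one_mul, add_zero]
  set H : Fin n → Fin 2 := dimerChain c d 1 (n / 2)
  have hH : ∀ {k}, k < 2 * p → H (site n (1 + k)) = if k % 2 = 0 then c else d :=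
    fun hk => dimerChain_apply c d (by omega) (by omega)
  have hsite : ∀ {k l}, k < n → l < n → k ≠ l → site n (1 + k) ≠ site n (1 + l) :=
    fun hk hl hkl => by rwa [Ne, site_add_inj hk hl]
  have hdot : (Pi.single (site n (2 * p - 1)) b + Pi.single (site n (2 * p)) a) ⬝ᵥ
      (Pi.single (site n (2 * q - 1)) a + H) = b * c + a * d := by
    rw [add_dotProduct, single_dotProduct, single_dotProduct, Pi.add_apply, Pi.add_apply,
      show 2 * p - 1 = 1 + (2 * p - 2) by omega, show 2 * p = 1 + (2 * p - 1) by omega,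
      show 2 * q - 1 = 1 + (2 * q - 2) by omega,
      Pi.single_eq_of_ne (hsite (by omega) (by omega) (by omega)),
      Pi.single_eq_of_ne (hsite (by omega) (by omega) (by omega)), hH (by omega), hH (by omega),
      if_pos (by omega), if_neg (by omega), zero_add, zero_add]
  have hX : Pi.single (site n (2 * q - 1)) a + H + Pi.single (site n (2 * p)) b +
      dimerChain a b (2 * p + 1) (q - (p + 1)) = H + dimerChain b a (2 * p) (q - p) := by
    rw [← single_add_dimerChain_add_single_of_lt a b hp hpq]
    abel
  have hZ : Pi.single (site n (2 * q - 1)) b + Pi.single (site n (2 * q)) a +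
      (Pi.single (site n (2 * p - 1)) b + Pi.single (site n (2 * p)) a)
        = cycleAdj (H + dimerChain b a (2 * p) (q - p)) := by
    obtain ⟨m, hm⟩ := hn
    rw [map_add, cycleAdj_dimerChain_cycle (n := n) (j := 0) c d (by omega), zero_add,
      cycleAdj_dimerChain_of_lt b a hp hpq]
    abel
  rw [hdot, hX, hZ, ← phase_add]

end Operators

lemma exists_eq_two_mul_add_two {k : ℕ} (hk : Even k) (hk4 : 4 ≤ k) :
    ∃ m, k = 2 * (m + 2) := by
  obtain ⟨l, hl⟩ := hk
  exact ⟨l - 2, by omega⟩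

lemma Usym_mulVec_cluster (hn : Even n) (hn4 : 4 ≤ n) (g : G2) :
    (Usym n g).mulVec (cluster n) = cluster n := by
  obtain ⟨a, b⟩ := g
  obtain ⟨m, hm⟩ := exists_eq_two_mul_add_two hn hn4
  have h := pauliOp_cycleAdj_mulVec_cluster (dimerChain (n := n) a b (0 + 1) (m + 2))
  rwa [cycleAdj_dimerChain_cycle a b (by omega), edgeParity_dimerChain_cycle a b (by omega),
    phase_zero, one_smul, zero_add, show m + 2 = n / 2 by omega,
    ← Usym_eq_pauliOp (n := n) a b] at h

lemma phase_twist (a b c d : Fin 2) :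
    phase (a * d + b * c) = (-1 : ℂ) ^ (ZMod.val (n := 2) a * ZMod.val (n := 2) d +
      ZMod.val (n := 2) b * ZMod.val (n := 2) c) := by
  rw [phase, neg_one_pow_eq_pow_mod_two (R := ℂ) (_ + _), Fin.val_add, Fin.val_mul, Fin.val_mul,
    ← Nat.add_mod]
  rfl

lemma TSOP_mulVec_cluster (hn : Even n) (hn4 : 4 ≤ n) {p q : ℕ} (hp : 1 ≤ p) (hpq : p < q)
    (hq : q ≤ n / 2) (g h : G2) :
    (TSOP n p q g h).mulVec (cluster n)
      = ((-1 : ℂ) ^ (g.1.val * h.2.val + g.2.val * h.1.val)) • cluster n := by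
  obtain ⟨a, b⟩ := g
  obtain ⟨c, d⟩ := h
  obtain ⟨m, hm⟩ := exists_eq_two_mul_add_two hn hn4
  rw [TSOP_eq_smul_pauliOp hn hn4 hp hpq hq a b c d, Matrix.smul_mulVec,
    pauliOp_cycleAdj_mulVec_cluster, smul_smul, ← phase_add, edgeParity_add,
    show n / 2 = m + 2 by omega,
    edgeParity_dimerChain_cycle (j := 0) c d (by omega),
    cycleAdj_dimerChain_cycle (j := 0) c d (by omega), dotProduct_zero,
    show 2 * p = 2 * p - 1 + 1 by omega, show q - p = q - p - 1 + 1 by omega,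
    edgeParity_dimerChain b a (by omega)]
  have key : ∀ a b c d : Fin 2, a * b + (b * c + a * d) + (0 + b * a + 0) = a * d + b * c := by
    decide
  rw [key a b c d, phase_twist a b c d]

lemma odd_twist : ∀ g h : G2, g ≠ 0 → h ≠ 0 → g ≠ h →
    Odd (g.1.val * h.2.val + g.2.val * h.1.val) := by
  decide

lemma Owin_mulVec_eq_self {g h : G2} {ψ : QState n} (hg : (Usym n g).mulVec ψ = ψ)
    (hh : (Usym n h).mulVec ψ = ψ) (hgh : (Usym n (g + h)).mulVec ψ = ψ)
    (hT : (TSOP n 1 (n / 6 + 1) g h).mulVec ψ = -ψ) : (Owin n g h).mulVec ψ = ψ := by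
  simp only [Owin, Matrix.smul_mulVec, Matrix.sub_mulVec, Matrix.add_mulVec, Matrix.one_mulVec,
    ← Matrix.mulVec_mulVec, hg, hh, hgh, hT, Matrix.mulVec_neg]
  module

lemma trace_vecMulVec_star_mul {ι : Type*} [Fintype ι] {ψ : ι → ℂ} {A : Matrix ι ι ℂ}
    (hA : A.mulVec ψ = ψ) :
    (Matrix.vecMulVec ψ (star ψ) * A).trace = ψ ⬝ᵥ star ψ := by
  rw [Matrix.trace_mul_comm, Matrix.mul_vecMulVec, hA, Matrix.trace_vecMulVec]

end ClusterState

open ClusterState in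
theorem cluster_state_wins_with_certainty (n : ℕ) [NeZero n] (hn : Even n) (hn4 : 4 ≤ n) :
    (∀ (g h : G2) (p q : ℕ), 1 ≤ p → p < q → q ≤ n / 2 →
      (TSOP n p q g h).mulVec (cluster n)
        = ((-1 : ℂ) ^ (g.1.val * h.2.val + g.2.val * h.1.val)) • cluster n) ∧
    (6 ∣ n → ∀ g h : G2, g ≠ 0 → h ≠ 0 → g ≠ h →
      (Matrix.vecMulVec (cluster n) (star (cluster n)) * Owin n g h).trace = 1) := by
  refine ⟨fun g h p q hp hpq hq => TSOP_mulVec_cluster hn hn4 hp hpq hq g h,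
    fun h6 g h hg hh hgh => ?_⟩
  have hT := TSOP_mulVec_cluster hn hn4 le_rfl (q := n / 6 + 1) (by omega) (by omega) g h
  rw [(odd_twist g h hg hh hgh).neg_one_pow, neg_one_smul] at hT
  rw [trace_vecMulVec_star_mul (Owin_mulVec_eq_self (Usym_mulVec_cluster hn hn4 g)
    (Usym_mulVec_cluster hn hn4 h) (Usym_mulVec_cluster hn hn4 (g + h)) hT),
    cluster_dotProduct_star]
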